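/- Fix k = 2 and let L, M ∈ ℝ, w₃, w₄ ∈ C²((0,∞)). Define Q on ℝ² \ {0} by Q(x) = w₃(r) E₃(φ) + w₄(r) E₄(φ), where (r,φ) are the polar coordinates of x and the frame is taken with k = 2. Then at every x ∈ ℝ² \ {0}: (L Δ + M 𝓛) Q = (L + M)( w₃''(r) + w₃'(r)/r − w₃(r)/r² ) E₃(φ) + L ( w₄''(r) + w₄'(r)/r − w₄(r)/r² ) E₄(φ), where Δ is the two-dimensional Laplacian applied componentwise. -/

import Mathlib

/-!
Only the entries `Q₁₃ = Q₃₁` and `Q₂₃ = Q₃₂` of `Q` are non-zero, and they are the components of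
`V / √2` for the planar vector field `V = w₃(r) e_r + w₄(r) e_φ`. So `ΔQ` is the same embedding of
the vector Laplacian `ΔV`; the row divergence `∂ₖQᵢₖ` is `(0, 0, div V / √2)` because `∂₃ = 0`, so
`𝓛Q` is the same embedding of `∇(div V)`.

Write `V = U(r) x + W(r) x^⊥` with `U = w₃ / r`, `W = w₄ / r`. For linear `ℓ`, the Hessian of
`G(r) ℓ(x)` is `A xᵢ xⱼ ℓ(x) + B (δᵢⱼ ℓ(x) + ℓ(eⱼ) xᵢ + ℓ(eᵢ) xⱼ)` with `B = G'/r`, `A = B'/r`.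
Contracting it gives `Δ(G(r) ℓ) = (G'' + 3G'/r) ℓ`, `∇div(G(r) x) = (G'' + 3G'/r) x` and
`∇div(G(r) x^⊥) = 0`, and `G'' + 3G'/r = (w'' + w'/r − w/r²) / r` for `G = w / r`.
-/

open Real Matrix MeasureTheory

noncomputable section

/-- Partial derivative in direction `i` of a scalar function on `ℝ²`. -/
def pd2 (i : Fin 2) (f : (Fin 2 → ℝ) → ℝ) (x : Fin 2 → ℝ) : ℝ :=
  fderiv ℝ f x (Pi.single i 1)

/-- Partial derivative with index in `Fin 3`, with the convention `∂₃ ≡ 0`. -/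
def pd (k : Fin 3) (f : (Fin 2 → ℝ) → ℝ) (x : Fin 2 → ℝ) : ℝ :=
  if h : (k : ℕ) < 2 then pd2 ⟨(k : ℕ), h⟩ f x else 0

/-- Componentwise two-dimensional Laplacian of a matrix-valued map. -/
def lap2 (Q : (Fin 2 → ℝ) → Matrix (Fin 3) (Fin 3) ℝ) (x : Fin 2 → ℝ) :
    Matrix (Fin 3) (Fin 3) ℝ :=
  Matrix.of fun i j => ∑ k : Fin 2, pd2 k (fun y => pd2 k (fun z => Q z i j) y) x

/-- The operator `𝓛 Q_{ij} = ∂_j∂_k Q_{ik} + ∂_i∂_k Q_{jk} − (2/3)∂_l∂_k Q_{lk} δ_{ij}`. -/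
def Lop (Q : (Fin 2 → ℝ) → Matrix (Fin 3) (Fin 3) ℝ) (x : Fin 2 → ℝ) :
    Matrix (Fin 3) (Fin 3) ℝ :=
  Matrix.of fun i j =>
    (∑ k, pd j (fun y => pd k (fun z => Q z i k) y) x)
    + (∑ k, pd i (fun y => pd k (fun z => Q z j k) y) x)
    - (2/3) * (∑ l, ∑ k, pd l (fun y => pd k (fun z => Q z l k) y) x)
        * (if i = j then (1 : ℝ) else 0)

/-- The Euler–Lagrange equations (EL) at a point. -/
def EL (L M a2 b2 c2 : ℝ) (Q : (Fin 2 → ℝ) → Matrix (Fin 3) (Fin 3) ℝ)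
    (x : Fin 2 → ℝ) : Prop :=
  L • lap2 Q x + M • Lop Q x =
    (-a2) • Q x
      - b2 • (Q x * Q x - ((Q x * Q x).trace / 3) • (1 : Matrix (Fin 3) (Fin 3) ℝ))
      + (c2 * (Q x * Q x).trace) • Q x

def nv (k : ℤ) (φ : ℝ) : Fin 3 → ℝ :=
  ![Real.cos ((k : ℝ) * φ / 2), Real.sin ((k : ℝ) * φ / 2), 0]

def mv (k : ℤ) (φ : ℝ) : Fin 3 → ℝ :=
  ![-Real.sin ((k : ℝ) * φ / 2), Real.cos ((k : ℝ) * φ / 2), 0]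

def e3 : Fin 3 → ℝ := ![0, 0, 1]

def E0 : Matrix (Fin 3) (Fin 3) ℝ :=
  Real.sqrt (3/2) • (vecMulVec e3 e3 - (1/3 : ℝ) • (1 : Matrix (Fin 3) (Fin 3) ℝ))

def E1 (k : ℤ) (φ : ℝ) : Matrix (Fin 3) (Fin 3) ℝ :=
  Real.sqrt 2 •
    (vecMulVec (nv k φ) (nv k φ)
      - (1/2 : ℝ) • ((1 : Matrix (Fin 3) (Fin 3) ℝ) - vecMulVec e3 e3))

def E2 (k : ℤ) (φ : ℝ) : Matrix (Fin 3) (Fin 3) ℝ :=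
  (Real.sqrt 2)⁻¹ • (vecMulVec (nv k φ) (mv k φ) + vecMulVec (mv k φ) (nv k φ))

def E3m (k : ℤ) (φ : ℝ) : Matrix (Fin 3) (Fin 3) ℝ :=
  (Real.sqrt 2)⁻¹ • (vecMulVec (nv k φ) e3 + vecMulVec e3 (nv k φ))

def E4m (k : ℤ) (φ : ℝ) : Matrix (Fin 3) (Fin 3) ℝ :=
  (Real.sqrt 2)⁻¹ • (vecMulVec (mv k φ) e3 + vecMulVec e3 (mv k φ))

def sPlus (a2 b2 c2 : ℝ) : ℝ := (b2 + Real.sqrt (b2^2 + 24 * a2 * c2)) / (4 * c2)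

/-- Rotation of `ℝ²` by angle `ψ`. -/
def rot2 (ψ : ℝ) (x : Fin 2 → ℝ) : Fin 2 → ℝ :=
  ![Real.cos ψ * x 0 - Real.sin ψ * x 1, Real.sin ψ * x 0 + Real.cos ψ * x 1]

/-- Rotation of `ℝ³` about `e₃` by angle `kψ/2`. -/
def Rk (k : ℤ) (ψ : ℝ) : Matrix (Fin 3) (Fin 3) ℝ :=
  Matrix.of
    ![![Real.cos ((k : ℝ) * ψ / 2), -Real.sin ((k : ℝ) * ψ / 2), 0],
      ![Real.sin ((k : ℝ) * ψ / 2), Real.cos ((k : ℝ) * ψ / 2), 0],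
      ![0, 0, 1]]

end

noncomputable section

namespace ElasticOperator

open Filter Topology Set ContinuousLinearMap

variable {f g : (Fin 2 → ℝ) → ℝ} {x : Fin 2 → ℝ} {i j : Fin 2}

lemma pd2_congr (h : f =ᶠ[𝓝 x] g) : pd2 i f x = pd2 i g x := by
  rw [pd2, pd2, h.fderiv_eq]

lemma pd2_pd2_congr (h : f =ᶠ[𝓝 x] g) :
    pd2 j (fun y => pd2 i f y) x = pd2 j (fun y => pd2 i g y) x :=
  pd2_congr (h.eventuallyEq_nhds.mono fun _ hy => pd2_congr hy)

lemma pd2_const_mul (c : ℝ) (f : (Fin 2 → ℝ) → ℝ) :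
    pd2 i (fun y => c * f y) x = c * pd2 i f x := by
  simp [pd2, ← smul_eq_mul, ← Pi.smul_def, fderiv_const_smul_field]

lemma pd2_const (c : ℝ) : pd2 i (fun _ => c) x = 0 := by
  simp [pd2]

lemma pd2_clm (ℓ : (Fin 2 → ℝ) →L[ℝ] ℝ) : pd2 i ℓ x = ℓ (Pi.single i 1) := by
  rw [pd2, ℓ.fderiv]

lemma pd2_apply (k : Fin 2) : pd2 i (fun y => y k) x = (Pi.single i 1 : Fin 2 → ℝ) k :=
  pd2_clm (proj k)

lemma pd2_add (hf : DifferentiableAt ℝ f x) (hg : DifferentiableAt ℝ g x) :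
    pd2 i (fun y => f y + g y) x = pd2 i f x + pd2 i g x := by
  simp [pd2, fderiv_fun_add hf hg]

lemma pd2_mul (hf : DifferentiableAt ℝ f x) (hg : DifferentiableAt ℝ g x) :
    pd2 i (fun y => f y * g y) x = pd2 i f x * g x + f x * pd2 i g x := by
  simp [pd2, fderiv_fun_mul hf hg]; ring

lemma pd2_comp {h : ℝ → ℝ} (hh : DifferentiableAt ℝ h (f x)) (hf : DifferentiableAt ℝ f x) :
    pd2 i (fun y => h (f y)) x = deriv h (f x) * pd2 i f x := by
  have := (hh.hasDerivAt.comp_hasFDerivAt x hf.hasFDerivAt).fderiv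
  simp only [Function.comp_def] at this
  simp [pd2, this]

def radius (x : Fin 2 → ℝ) : ℝ := √(x 0 ^ 2 + x 1 ^ 2)

lemma radius_sq (x : Fin 2 → ℝ) : radius x ^ 2 = x 0 ^ 2 + x 1 ^ 2 :=
  Real.sq_sqrt (by positivity)

lemma radius_ne_zero_iff : radius x ≠ 0 ↔ x 0 ^ 2 + x 1 ^ 2 ≠ 0 := by
  rw [radius, ne_eq, Real.sqrt_eq_zero (by positivity)]

lemma eventually_radius_pos (hx : 0 < radius x) : ∀ᶠ y in 𝓝 x, 0 < radius y :=
  (isOpen_lt continuous_const (by unfold radius; fun_prop)).mem_nhds hx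

lemma contDiffAt_radius {n : WithTop ℕ∞} (hx : radius x ≠ 0) : ContDiffAt ℝ n radius x :=
  ContDiffAt.sqrt (by fun_prop) (radius_ne_zero_iff.mp hx)

lemma pd2_radius (hx : radius x ≠ 0) : pd2 i radius x = x i / radius x := by
  have hq : HasFDerivAt (fun y : Fin 2 → ℝ => y 0 ^ 2 + y 1 ^ 2)
      ((2 * x 0) • proj 0 + (2 * x 1) • proj 1 : (Fin 2 → ℝ) →L[ℝ] ℝ) x := by
    have h0 : HasFDerivAt (fun y : Fin 2 → ℝ => y 0) (proj 0 : (Fin 2 → ℝ) →L[ℝ] ℝ) x :=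
      hasFDerivAt_apply 0 x
    have h1 : HasFDerivAt (fun y : Fin 2 → ℝ => y 1) (proj 1 : (Fin 2 → ℝ) →L[ℝ] ℝ) x :=
      hasFDerivAt_apply 1 x
    refine ((h0.pow 2).fun_add (h1.pow 2)).congr_fderiv ?_
    ext v; simp
  have hr : HasFDerivAt radius _ x := hq.sqrt (radius_ne_zero_iff.mp hx)
  rw [pd2, hr.fderiv, ← radius]
  fin_cases i <;> simp <;> field_simp

def radialDeriv (G : ℝ → ℝ) (s : ℝ) : ℝ := deriv G s / s

lemma pd2_radial_mul {G : ℝ → ℝ} (hG : DifferentiableAt ℝ G (radius x)) (hx : radius x ≠ 0)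
    (hf : DifferentiableAt ℝ f x) :
    pd2 i (fun y => G (radius y) * f y) x
      = radialDeriv G (radius x) * x i * f x + G (radius x) * pd2 i f x := by
  have hr : DifferentiableAt ℝ radius x :=
    (contDiffAt_radius (n := 1) hx).differentiableAt one_ne_zero
  rw [pd2_mul (f := fun y => G (radius y)) (hG.comp x hr) hf, pd2_comp hG hr, pd2_radius hx,
    radialDeriv]
  ring

lemma pd2_pd2_add (hf : ContDiffAt ℝ 2 f x) (hg : ContDiffAt ℝ 2 g x) :
    pd2 j (fun y => pd2 i (fun z => f z + g z) y) x
      = pd2 j (fun y => pd2 i f y) x + pd2 j (fun y => pd2 i g y) x := by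
  have hdiff : ∀ {h : (Fin 2 → ℝ) → ℝ}, ContDiffAt ℝ 2 h x →
      DifferentiableAt ℝ (fun y => pd2 i h y) x := fun hh =>
    ((hh.fderiv_right (m := 1) le_rfl).differentiableAt one_ne_zero).clm_apply
      (differentiableAt_const _)
  have hsplit : (fun y => pd2 i (fun z => f z + g z) y) =ᶠ[𝓝 x] fun y => pd2 i f y + pd2 i g y :=
    ((hf.eventually (by simp)).and (hg.eventually (by simp))).mono fun y hy =>
      pd2_add (hy.1.differentiableAt two_ne_zero) (hy.2.differentiableAt two_ne_zero)
  rw [pd2_congr hsplit, pd2_add (hdiff hf) (hdiff hg)]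

variable {G : ℝ → ℝ}

lemma pd2_pd2_radial_mul_clm (hG : ContDiffOn ℝ 2 G (Ioi 0)) (hx : 0 < radius x)
    (ℓ : (Fin 2 → ℝ) →L[ℝ] ℝ) :
    pd2 j (fun y => pd2 i (fun z => G (radius z) * ℓ z) y) x
      = radialDeriv (radialDeriv G) (radius x) * x i * x j * ℓ x
        + radialDeriv G (radius x) * ((Pi.single j 1 : Fin 2 → ℝ) i * ℓ x
          + ℓ (Pi.single j 1) * x i + ℓ (Pi.single i 1) * x j) := by
  have hG1 : ∀ s, 0 < s → DifferentiableAt ℝ G s := fun s hs =>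
    (hG.contDiffAt (Ioi_mem_nhds hs)).differentiableAt two_ne_zero
  have hB : DifferentiableAt ℝ (radialDeriv G) (radius x) := by
    have hG' : DifferentiableAt ℝ (deriv G) (radius x) :=
      ((hG.deriv_of_isOpen isOpen_Ioi (m := 1) (by norm_num)).differentiableOn one_ne_zero
        ).differentiableAt (Ioi_mem_nhds hx)
    exact hG'.div differentiableAt_id hx.ne'
  have hr : DifferentiableAt ℝ radius x :=
    (contDiffAt_radius (n := 1) hx.ne').differentiableAt one_ne_zero
  have hfirst : (fun y => pd2 i (fun z => G (radius z) * ℓ z) y) =ᶠ[𝓝 x]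
      fun y => radialDeriv G (radius y) * (y i * ℓ y) + G (radius y) * ℓ (Pi.single i 1) :=
    (eventually_radius_pos hx).mono fun y hy => by
      dsimp only
      rw [pd2_radial_mul (hG1 _ hy) hy.ne' ℓ.differentiableAt, pd2_clm]; ring
  have hGx := hG1 _ hx
  rw [pd2_congr hfirst, pd2_add (by fun_prop) (by fun_prop),
    pd2_radial_mul hB hx.ne' (by fun_prop), pd2_radial_mul hGx hx.ne' (differentiableAt_const _),
    pd2_mul (by fun_prop) ℓ.differentiableAt, pd2_clm, pd2_const, pd2_apply]
  ring

def bessel1 (u : ℝ → ℝ) (r : ℝ) : ℝ := deriv (deriv u) r + deriv u r / r - u r / r ^ 2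

/-- The left-hand side is `G'' + 3 G' / r` for `G = u / id`. -/
lemma radialDeriv_radialDeriv_div_id {u : ℝ → ℝ} {r : ℝ} (hu : ContDiffOn ℝ 2 u (Ioi 0))
    (hr : 0 < r) :
    radialDeriv (radialDeriv fun s => u s / s) r * r ^ 2 + 4 * radialDeriv (fun s => u s / s) r
      = bessel1 u r / r := by
  have hu1 : ∀ s, 0 < s → HasDerivAt u (deriv u s) s := fun s hs =>
    ((hu.contDiffAt (Ioi_mem_nhds hs)).differentiableAt two_ne_zero).hasDerivAt
  have hu2 : HasDerivAt (deriv u) (deriv (deriv u) r) r :=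
    (((hu.deriv_of_isOpen isOpen_Ioi (m := 1) (by norm_num)).differentiableOn one_ne_zero
      ).differentiableAt (Ioi_mem_nhds hr)).hasDerivAt
  have hB : ∀ s, 0 < s → radialDeriv (fun s => u s / s) s = (deriv u s * s - u s) / s ^ 3 :=
    fun s hs => by
      rw [radialDeriv, ((hu1 s hs).fun_div (hasDerivAt_id' s) hs.ne').deriv]
      field_simp
  have hBr : (radialDeriv fun s => u s / s) =ᶠ[𝓝 r] fun s => (deriv u s * s - u s) / s ^ 3 :=
    (eventually_gt_nhds hr).mono hB
  have hBB : HasDerivAt (fun s => (deriv u s * s - u s) / s ^ 3)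
      (((deriv (deriv u) r * r + deriv u r * 1 - deriv u r) * r ^ 3
        - (deriv u r * r - u r) * (↑3 * r ^ 2)) / (r ^ 3) ^ 2) r :=
    ((hu2.fun_mul (hasDerivAt_id' r)).fun_sub (hu1 r hr)).fun_div (hasDerivAt_pow 3 r)
      (by positivity)
  nth_rw 1 [radialDeriv]
  rw [hBr.deriv_eq, hBB.deriv, hB r hr, bessel1]
  field_simp
  ring

def perp : (Fin 2 → ℝ) →L[ℝ] (Fin 2 → ℝ) :=
  .pi (![-proj 1, proj 0] : Fin 2 → (Fin 2 → ℝ) →L[ℝ] ℝ)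

def vecLaplacian (f : (Fin 2 → ℝ) → Fin 2 → ℝ) (x : Fin 2 → ℝ) : Fin 2 → ℝ :=
  fun k => ∑ i, pd2 i (fun y => pd2 i (fun z => f z k) y) x

def gradDiv (f : (Fin 2 → ℝ) → Fin 2 → ℝ) (x : Fin 2 → ℝ) : Fin 2 → ℝ :=
  fun j => ∑ k, pd2 j (fun y => pd2 k (fun z => f z k) y) x

section VectorFields

variable {F H : (Fin 2 → ℝ) → Fin 2 → ℝ}

lemma vecLaplacian_add (hF : ContDiffAt ℝ 2 F x) (hH : ContDiffAt ℝ 2 H x) :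
    vecLaplacian (fun y => F y + H y) x = vecLaplacian F x + vecLaplacian H x := by
  funext k
  simp only [vecLaplacian, Pi.add_apply, ← Finset.sum_add_distrib]
  exact Finset.sum_congr rfl fun _ _ =>
    pd2_pd2_add (contDiffAt_pi.mp hF k) (contDiffAt_pi.mp hH k)

lemma gradDiv_add (hF : ContDiffAt ℝ 2 F x) (hH : ContDiffAt ℝ 2 H x) :
    gradDiv (fun y => F y + H y) x = gradDiv F x + gradDiv H x := by
  funext j
  simp only [gradDiv, Pi.add_apply, ← Finset.sum_add_distrib]
  exact Finset.sum_congr rfl fun k _ =>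
    pd2_pd2_add (contDiffAt_pi.mp hF k) (contDiffAt_pi.mp hH k)

lemma contDiffAt_radial_smul (hG : ContDiffOn ℝ 2 G (Ioi 0)) (hx : 0 < radius x)
    (A : (Fin 2 → ℝ) →L[ℝ] (Fin 2 → ℝ)) : ContDiffAt ℝ 2 (fun y => G (radius y) • A y) x :=
  ((hG.contDiffAt (Ioi_mem_nhds hx)).comp x (contDiffAt_radius hx.ne')).smul A.contDiff.contDiffAt

lemma vecLaplacian_radial_smul (hG : ContDiffOn ℝ 2 G (Ioi 0)) (hx : 0 < radius x)
    (A : (Fin 2 → ℝ) →L[ℝ] (Fin 2 → ℝ)) :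
    vecLaplacian (fun y => G (radius y) • A y) x
      = (radialDeriv (radialDeriv G) (radius x) * radius x ^ 2 + 4 * radialDeriv G (radius x))
        • A x := by
  funext k
  have hA : A x = x 0 • A (Pi.single 0 1) + x 1 • A (Pi.single 1 1) := by
    rw [← map_smul, ← map_smul, ← map_add]
    congr 1
    ext i; fin_cases i <;> simp
  change ∑ i, pd2 i (fun y => pd2 i (fun z => G (radius z) * (proj k ∘L A) z) y) x = _
  rw [Fin.sum_univ_two, pd2_pd2_radial_mul_clm hG hx, pd2_pd2_radial_mul_clm hG hx]
  simp [hA, radius_sq]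
  ring

lemma gradDiv_radial_smul_id (hG : ContDiffOn ℝ 2 G (Ioi 0)) (hx : 0 < radius x) :
    gradDiv (fun y => G (radius y) • y) x
      = (radialDeriv (radialDeriv G) (radius x) * radius x ^ 2 + 4 * radialDeriv G (radius x))
        • x := by
  funext j
  change ∑ k, pd2 j (fun y => pd2 k (fun z => G (radius z) * proj (R := ℝ) k z) y) x = _
  rw [Fin.sum_univ_two, pd2_pd2_radial_mul_clm hG hx, pd2_pd2_radial_mul_clm hG hx]
  fin_cases j <;> simp [radius_sq] <;> ring

lemma gradDiv_radial_smul_perp (hG : ContDiffOn ℝ 2 G (Ioi 0)) (hx : 0 < radius x) :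
    gradDiv (fun y => G (radius y) • perp y) x = 0 := by
  funext j
  change ∑ k, pd2 j (fun y => pd2 k (fun z => G (radius z) * (proj (R := ℝ) k ∘L perp) z) y) x
    = _
  rw [Fin.sum_univ_two, pd2_pd2_radial_mul_clm hG hx, pd2_pd2_radial_mul_clm hG hx]
  fin_cases j <;> simp [perp] <;> ring

end VectorFields

def radialUnit (y : Fin 2 → ℝ) : Fin 2 → ℝ := (radius y)⁻¹ • y

def angularUnit (y : Fin 2 → ℝ) : Fin 2 → ℝ := (radius y)⁻¹ • perp y

def polarField (u v : ℝ → ℝ) (y : Fin 2 → ℝ) : Fin 2 → ℝ :=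
  u (radius y) • radialUnit y + v (radius y) • angularUnit y

section PolarFields

variable {u v : ℝ → ℝ}

lemma polarField_eq (u v : ℝ → ℝ) :
    polarField u v
      = fun y => (u (radius y) / radius y) • y + (v (radius y) / radius y) • perp y := by
  funext y
  simp only [polarField, radialUnit, angularUnit, smul_smul, div_eq_mul_inv]

lemma vecLaplacian_polarField (hu : ContDiffOn ℝ 2 u (Ioi 0)) (hv : ContDiffOn ℝ 2 v (Ioi 0))
    (hx : 0 < radius x) :
    vecLaplacian (polarField u v) x
      = bessel1 u (radius x) • radialUnit x + bessel1 v (radius x) • angularUnit x := by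
  have hU : ContDiffOn ℝ 2 (fun s => u s / s) (Ioi 0) := hu.div contDiffOn_id fun s hs => hs.ne'
  have hV : ContDiffOn ℝ 2 (fun s => v s / s) (Ioi 0) := hv.div contDiffOn_id fun s hs => hs.ne'
  have hlapU := vecLaplacian_radial_smul hU hx (.id ℝ _)
  have hdiffU := contDiffAt_radial_smul hU hx (.id ℝ _)
  simp only [ContinuousLinearMap.coe_id', id_eq] at hlapU hdiffU
  rw [polarField_eq, vecLaplacian_add hdiffU (contDiffAt_radial_smul hV hx _), hlapU,
    vecLaplacian_radial_smul hV hx, radialDeriv_radialDeriv_div_id hu hx,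
    radialDeriv_radialDeriv_div_id hv hx, radialUnit, angularUnit, smul_smul, smul_smul,
    div_eq_mul_inv, div_eq_mul_inv]

lemma gradDiv_polarField (hu : ContDiffOn ℝ 2 u (Ioi 0)) (hv : ContDiffOn ℝ 2 v (Ioi 0))
    (hx : 0 < radius x) :
    gradDiv (polarField u v) x = bessel1 u (radius x) • radialUnit x := by
  have hU : ContDiffOn ℝ 2 (fun s => u s / s) (Ioi 0) := hu.div contDiffOn_id fun s hs => hs.ne'
  have hV : ContDiffOn ℝ 2 (fun s => v s / s) (Ioi 0) := hv.div contDiffOn_id fun s hs => hs.ne'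
  have hdiffU := contDiffAt_radial_smul hU hx (.id ℝ _)
  simp only [ContinuousLinearMap.coe_id', id_eq] at hdiffU
  rw [polarField_eq, gradDiv_add hdiffU (contDiffAt_radial_smul hV hx _),
    gradDiv_radial_smul_id hU hx, gradDiv_radial_smul_perp hV hx, add_zero,
    radialDeriv_radialDeriv_div_id hu hx, radialUnit, smul_smul, div_eq_mul_inv]

end PolarFields

def symE3 : (Fin 2 → ℝ) →ₗ[ℝ] Matrix (Fin 3) (Fin 3) ℝ where
  toFun v := (√2)⁻¹ • !![0, 0, v 0; 0, 0, v 1; v 0, v 1, 0]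
  map_add' v w := by ext i j; fin_cases i <;> fin_cases j <;> simp [mul_add]
  map_smul' c v := by ext i j; fin_cases i <;> fin_cases j <;> simp [mul_left_comm]

lemma E3m_two (φ : ℝ) : E3m 2 φ = symE3 ![cos φ, sin φ] := by
  ext i j; fin_cases i <;> fin_cases j <;> simp [E3m, symE3, nv, e3]

lemma E4m_two (φ : ℝ) : E4m 2 φ = symE3 ![-sin φ, cos φ] := by
  ext i j; fin_cases i <;> fin_cases j <;> simp [E4m, symE3, mv, e3]

section MatrixFields

variable {Q Q' : (Fin 2 → ℝ) → Matrix (Fin 3) (Fin 3) ℝ}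

lemma pd_pd_congr {k l : Fin 3} (h : f =ᶠ[𝓝 x] g) :
    pd l (fun y => pd k f y) x = pd l (fun y => pd k g y) x := by
  simp only [pd]
  split_ifs
  · exact pd2_pd2_congr h
  all_goals simp [pd2_const]

lemma lap2_congr (h : Q =ᶠ[𝓝 x] Q') : lap2 Q x = lap2 Q' x := by
  have hc : ∀ i j k, pd2 k (fun y => pd2 k (fun z => Q z i j) y) x
      = pd2 k (fun y => pd2 k (fun z => Q' z i j) y) x := fun i j k =>
    pd2_pd2_congr (h.mono fun z hz => by simp [hz])
  simp only [lap2, hc]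

lemma Lop_congr (h : Q =ᶠ[𝓝 x] Q') : Lop Q x = Lop Q' x := by
  have hc : ∀ i j k l, pd l (fun y => pd k (fun z => Q z i j) y) x
      = pd l (fun y => pd k (fun z => Q' z i j) y) x := fun i j k l =>
    pd_pd_congr (h.mono fun z hz => by simp [hz])
  simp only [Lop, hc]

lemma lap2_symE3 (F : (Fin 2 → ℝ) → Fin 2 → ℝ) :
    lap2 (fun z => symE3 (F z)) x = symE3 (vecLaplacian F x) := by
  ext i j
  fin_cases i <;> fin_cases j <;>
    simp [lap2, symE3, vecLaplacian, pd2_const_mul, pd2_const, mul_add]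

lemma Lop_symE3 (F : (Fin 2 → ℝ) → Fin 2 → ℝ) :
    Lop (fun z => symE3 (F z)) x = symE3 (gradDiv F x) := by
  ext i j
  fin_cases i <;> fin_cases j <;>
    simp [Lop, pd, symE3, gradDiv, Fin.sum_univ_three, pd2_const_mul, pd2_const, mul_add]

end MatrixFields

lemma radius_polar {r : ℝ} (hr : 0 ≤ r) (φ : ℝ) : radius ![r * cos φ, r * sin φ] = r := by
  rw [radius, Matrix.cons_val_zero, Matrix.cons_val_one, Matrix.cons_val_fin_one,
    show (r * cos φ) ^ 2 + (r * sin φ) ^ 2 = r ^ 2 by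
      linear_combination r ^ 2 * sin_sq_add_cos_sq φ,
    Real.sqrt_sq hr]

lemma radialUnit_polar {r : ℝ} (hr : 0 < r) (φ : ℝ) :
    radialUnit ![r * cos φ, r * sin φ] = ![cos φ, sin φ] := by
  rw [radialUnit, radius_polar hr.le]
  ext i; fin_cases i <;> simp [hr.ne']

lemma angularUnit_polar {r : ℝ} (hr : 0 < r) (φ : ℝ) :
    angularUnit ![r * cos φ, r * sin φ] = ![-sin φ, cos φ] := by
  rw [angularUnit, radius_polar hr.le]
  ext i; fin_cases i <;> simp [perp, hr.ne']

lemma exists_eq_polar (y : Fin 2 → ℝ) : ∃ φ, y = ![radius y * cos φ, radius y * sin φ] := by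
  set w : ℂ := ⟨y 0, y 1⟩
  have hw : ‖w‖ = radius y := by
    rw [Complex.norm_def, Complex.normSq_mk, radius]
    ring_nf
  refine ⟨w.arg, ?_⟩
  ext i
  fin_cases i
  · simp [← hw, Complex.norm_mul_cos_arg, w]
  · simp [← hw, Complex.norm_mul_sin_arg, w]

lemma eventuallyEq_symE3_polarField {Q : (Fin 2 → ℝ) → Matrix (Fin 3) (Fin 3) ℝ} {u v : ℝ → ℝ}
    (hQ : ∀ r > (0 : ℝ), ∀ φ : ℝ, Q ![r * cos φ, r * sin φ] = u r • E3m 2 φ + v r • E4m 2 φ)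
    (hx : 0 < radius x) : Q =ᶠ[𝓝 x] fun z => symE3 (polarField u v z) :=
  (eventually_radius_pos hx).mono fun z hz => by
    obtain ⟨φ, hφ⟩ := exists_eq_polar z
    dsimp only
    rw [hφ, hQ _ hz, polarField, radius_polar hz.le, radialUnit_polar hz, angularUnit_polar hz,
      E3m_two, E4m_two, map_add, map_smul, map_smul]

end ElasticOperator

end

open ElasticOperator in
/-- For `k = 2`,
`(LΔ + M𝓛)(w₃E₃ + w₄E₄) = (L+M)(w₃'' + w₃'/r − w₃/r²)E₃ + L(w₄'' + w₄'/r − w₄/r²)E₄`. -/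
theorem elastic_operator_of_E3_E4_k2
    (L M : ℝ) (w3 w4 : ℝ → ℝ)
    (hw3 : ContDiffOn ℝ 2 w3 (Set.Ioi 0)) (hw4 : ContDiffOn ℝ 2 w4 (Set.Ioi 0))
    (Q : (Fin 2 → ℝ) → Matrix (Fin 3) (Fin 3) ℝ)
    (hQ : ∀ r > (0 : ℝ), ∀ φ : ℝ,
      Q ![r * Real.cos φ, r * Real.sin φ] = w3 r • E3m 2 φ + w4 r • E4m 2 φ) :
    ∀ r > (0 : ℝ), ∀ φ : ℝ,
      L • lap2 Q ![r * Real.cos φ, r * Real.sin φ]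
        + M • Lop Q ![r * Real.cos φ, r * Real.sin φ] =
      ((L + M) * (deriv (deriv w3) r + deriv w3 r / r - w3 r / r^2)) • E3m 2 φ
        + (L * (deriv (deriv w4) r + deriv w4 r / r - w4 r / r^2)) • E4m 2 φ := by
  intro r hr φ
  have hrx : radius ![r * cos φ, r * sin φ] = r := radius_polar hr.le φ
  have hx : 0 < radius ![r * cos φ, r * sin φ] := by rwa [hrx]
  have hQx := eventuallyEq_symE3_polarField hQ hx
  rw [lap2_congr hQx, Lop_congr hQx, lap2_symE3, Lop_symE3, vecLaplacian_polarField hw3 hw4 hx,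
    gradDiv_polarField hw3 hw4 hx, hrx, radialUnit_polar hr, angularUnit_polar hr, E3m_two, E4m_two]
  simp only [map_add, map_smul, bessel1]
  module
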